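/- Let φ : ℝ^d → ℝ be C² with compact support and let v : ℝ^d → ℝ^d be a C¹, compactly supported, divergence-free vector field. Then ∫_{ℝ^d} ∇φ(x) · ∇( v·∇φ )(x) dx = ∫_{ℝ^d} (∇φ(x)⊗∇φ(x)) : Dv(x) dx, where A : B = ∑_{i,j} A_{ij}B_{ij} and Dv(x) is the Fréchet derivative of v at x viewed as a matrix. -/

import Mathlib

/-!
Differentiating `y ↦ Dφ(y)(v y)` gives `Dφ(Dv e_i) + D²φ(e_i, v)`. Paired with `∇φ`, the
first term is the capillary integrand, and by symmetry of `D²φ` the second is `½ D(|∇φ|²)(v)`,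
whose integral is `-½ ∫ |∇φ|² div v = 0` after integrating by parts.
-/

open MeasureTheory

theorem integral_mul_fderiv_eq_neg_fderiv_mul_of_hasCompactSupport
    {E : Type*} [NormedAddCommGroup E] [NormedSpace ℝ E] [FiniteDimensional ℝ E]
    [MeasurableSpace E] [BorelSpace E] {μ : Measure E} [μ.IsAddHaarMeasure]
    {f g : E → ℝ} (hf : ContDiff ℝ 1 f) (hfc : HasCompactSupport f) (hg : ContDiff ℝ 1 g)
    (w : E) :
    ∫ x, f x * fderiv ℝ g x w ∂μ = -∫ x, fderiv ℝ f x w * g x ∂μ := by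
  have hf' : Continuous fun x => fderiv ℝ f x w :=
    (hf.continuous_fderiv one_ne_zero).clm_apply continuous_const
  have hg' : Continuous fun x => fderiv ℝ g x w :=
    (hg.continuous_fderiv one_ne_zero).clm_apply continuous_const
  refine integral_mul_fderiv_eq_neg_fderiv_mul_of_integrable ?_ ?_ ?_
    (fun x _ => hf.differentiable one_ne_zero x) (fun x _ => hg.differentiable one_ne_zero x)
  · exact (hf'.mul hg.continuous).integrable_of_hasCompactSupport
      (hfc.fderiv_apply (𝕜 := ℝ) w).mul_right
  · exact (hf.continuous.mul hg').integrable_of_hasCompactSupport hfc.mul_right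
  · exact (hf.continuous.mul hg.continuous).integrable_of_hasCompactSupport hfc.mul_right

namespace EuclideanSpace

variable {ι : Type*} [Fintype ι]

theorem fderiv_coord_apply {E : Type*} [NormedAddCommGroup E] [NormedSpace ℝ E]
    {v : E → EuclideanSpace ℝ ι} (j : ι) (x w : E) (hv : DifferentiableAt ℝ v x) :
    fderiv ℝ (fun y => v y j) x w = fderiv ℝ v x w j :=
  congr($(((proj j : EuclideanSpace ℝ ι →L[ℝ] ℝ).hasFDerivAt.comp x hv.hasFDerivAt).fderiv) w)

variable [DecidableEq ι]

noncomputable def divergence (v : EuclideanSpace ℝ ι → EuclideanSpace ℝ ι)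
    (x : EuclideanSpace ℝ ι) : ℝ :=
  ∑ i, fderiv ℝ v x (single i 1) i

theorem map_eq_sum_apply_smul_map_single {F : Type*} [NormedAddCommGroup F] [NormedSpace ℝ F]
    (L : EuclideanSpace ℝ ι →L[ℝ] F) (w : EuclideanSpace ℝ ι) :
    L w = ∑ j, w j • L (single j 1) := by
  conv_lhs => rw [← (basisFun ι ℝ).sum_repr w]
  simp

theorem sum_apply_single_mul_apply_comp_single (L : EuclideanSpace ℝ ι →L[ℝ] ℝ)
    (M : EuclideanSpace ℝ ι →L[ℝ] EuclideanSpace ℝ ι) :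
    ∑ i, L (single i 1) * L (M (single i 1))
      = ∑ i, ∑ j, (L (single i 1) * L (single j 1)) * M (single j 1) i := by
  rw [Finset.sum_comm]
  refine Finset.sum_congr rfl fun i _ => ?_
  rw [map_eq_sum_apply_smul_map_single L (M (single i 1)), Finset.mul_sum]
  refine Finset.sum_congr rfl fun j _ => ?_
  rw [smul_eq_mul]
  ring

theorem integral_fderiv_apply_eq_neg_integral_mul_divergence {ψ : EuclideanSpace ℝ ι → ℝ}
    {v : EuclideanSpace ℝ ι → EuclideanSpace ℝ ι}
    (hψ : ContDiff ℝ 1 ψ) (hv : ContDiff ℝ 1 v) (hvc : HasCompactSupport v) :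
    ∫ x, fderiv ℝ ψ x (v x) = -∫ x, ψ x * divergence v x := by
  have hvj : ∀ j, ContDiff ℝ 1 fun x => v x j := fun j =>
    (proj j : EuclideanSpace ℝ ι →L[ℝ] ℝ).contDiff.comp hv
  have hvjc : ∀ j, HasCompactSupport fun x => v x j := fun j =>
    hvc.comp_left (g := fun w : EuclideanSpace ℝ ι => w j) rfl
  have hfderiv_vj : ∀ j x w, fderiv ℝ (fun y => v y j) x w = fderiv ℝ v x w j :=
    fun j x w => fderiv_coord_apply j x w (hv.differentiable one_ne_zero x)
  calc ∫ x, fderiv ℝ ψ x (v x)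
      = ∫ x, ∑ j, v x j * fderiv ℝ ψ x (single j 1) := by
        simp only [← smul_eq_mul, ← map_eq_sum_apply_smul_map_single]
    _ = ∑ j, ∫ x, v x j * fderiv ℝ ψ x (single j 1) := by
        refine integral_finsetSum _ fun j _ => ?_
        exact ((hvj j).continuous.mul ((hψ.continuous_fderiv one_ne_zero).clm_apply
          continuous_const)).integrable_of_hasCompactSupport (hvjc j).mul_right
    _ = ∑ j, -∫ x, fderiv ℝ v x (single j 1) j * ψ x := by
        refine Finset.sum_congr rfl fun j _ => ?_
        simp only [integral_mul_fderiv_eq_neg_fderiv_mul_of_hasCompactSupport (hvj j) (hvjc j) hψ,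
          hfderiv_vj]
    _ = -∫ x, ψ x * divergence v x := by
        rw [Finset.sum_neg_distrib, ← integral_finsetSum]
        · simp only [divergence, Finset.mul_sum, mul_comm]
        intro j _
        simp only [← hfderiv_vj]
        exact ((((hvj j).continuous_fderiv one_ne_zero).clm_apply continuous_const).mul
          hψ.continuous).integrable_of_hasCompactSupport
          ((hvjc j).fderiv_apply (𝕜 := ℝ) _).mul_right

variable {φ : EuclideanSpace ℝ ι → ℝ} {x : EuclideanSpace ℝ ι}

theorem fderiv_sum_sq_fderiv_apply_single (hφ : DifferentiableAt ℝ (fderiv ℝ φ) x)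
    (w : EuclideanSpace ℝ ι) :
    fderiv ℝ (fun y => ∑ i, fderiv ℝ φ y (single i 1) ^ 2) x w
      = 2 * ∑ i, fderiv ℝ φ x (single i 1) * fderiv ℝ (fderiv ℝ φ) x w (single i 1) := by
  have hpartial : ∀ i, DifferentiableAt ℝ (fun y => fderiv ℝ φ y (single i 1)) x :=
    fun i => hφ.clm_apply (differentiableAt_const _)
  rw [fderiv_fun_sum fun i _ => (hpartial i).fun_pow 2, Finset.mul_sum]
  simp [fderiv_fun_pow _ (hpartial _), fderiv_clm_apply hφ (differentiableAt_const _), mul_assoc]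

theorem sum_fderiv_apply_single_mul_fderiv_fderiv_apply
    {v : EuclideanSpace ℝ ι → EuclideanSpace ℝ ι}
    (hφ : ContDiffAt ℝ 2 φ x) (hv : DifferentiableAt ℝ v x) :
    ∑ i, fderiv ℝ φ x (single i 1) * fderiv ℝ (fun y => fderiv ℝ φ y (v y)) x (single i 1)
      = ∑ i, ∑ j, (fderiv ℝ φ x (single i 1) * fderiv ℝ φ x (single j 1)) *
          fderiv ℝ v x (single j 1) i
        + fderiv ℝ (fun y => ∑ i, fderiv ℝ φ y (single i 1) ^ 2) x (v x) / 2 := by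
  have hφ' : DifferentiableAt ℝ (fderiv ℝ φ) x :=
    (hφ.fderiv_right (m := 1) le_rfl).differentiableAt one_ne_zero
  have hsymm := hφ.isSymmSndFDerivAt (by simp)
  rw [← sum_apply_single_mul_apply_comp_single, fderiv_sum_sq_fderiv_apply_single hφ',
    mul_div_cancel_left₀ _ two_ne_zero, ← Finset.sum_add_distrib]
  refine Finset.sum_congr rfl fun i _ => ?_
  rw [fderiv_clm_apply hφ' hv, hsymm]
  simp [mul_add]

end EuclideanSpace

theorem integral_grad_dot_grad_convective_eq_capillary_general
    (d : ℕ) (φ : EuclideanSpace ℝ (Fin d) → ℝ)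
    (v : EuclideanSpace ℝ (Fin d) → EuclideanSpace ℝ (Fin d))
    (hφ : ContDiff ℝ 2 φ)
    (hv : ContDiff ℝ 1 v) (hvc : HasCompactSupport v)
    (hdiv : ∀ x, ∑ i, fderiv ℝ v x (EuclideanSpace.single i (1:ℝ)) i = 0) :
    ∫ x, ∑ i, fderiv ℝ φ x (EuclideanSpace.single i (1:ℝ)) *
        fderiv ℝ (fun y => fderiv ℝ φ y (v y)) x (EuclideanSpace.single i (1:ℝ))
      = ∫ x, ∑ i, ∑ j,
          (fderiv ℝ φ x (EuclideanSpace.single i (1:ℝ)) *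
            fderiv ℝ φ x (EuclideanSpace.single j (1:ℝ))) *
          fderiv ℝ v x (EuclideanSpace.single j (1:ℝ)) i := by
  set ψ := fun y => ∑ i, fderiv ℝ φ y (EuclideanSpace.single i (1:ℝ)) ^ 2
  have hDφ := hφ.fderiv_right (m := 1) le_rfl
  have hDv := hv.continuous_fderiv one_ne_zero
  have hψ : ContDiff ℝ 1 ψ := by fun_prop
  have hDψ := hψ.continuous_fderiv one_ne_zero
  have hcapillary : Integrable fun x => ∑ i, ∑ j,
      (fderiv ℝ φ x (EuclideanSpace.single i (1:ℝ)) *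
        fderiv ℝ φ x (EuclideanSpace.single j (1:ℝ))) *
        fderiv ℝ v x (EuclideanSpace.single j (1:ℝ)) i :=
    Continuous.integrable_of_hasCompactSupport (by fun_prop) ((hvc.fderiv (𝕜 := ℝ)).mono
      (Function.support_subset_iff'.2 fun x hx => by simp [Function.notMem_support.1 hx]))
  have hconvective : Integrable fun x => fderiv ℝ ψ x (v x) / 2 :=
    Continuous.integrable_of_hasCompactSupport (by fun_prop) (hvc.mono
      (Function.support_subset_iff'.2 fun x hx => by simp [Function.notMem_support.1 hx]))
  rw [integral_congr_ae (.of_forall fun x =>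
      EuclideanSpace.sum_fderiv_apply_single_mul_fderiv_fderiv_apply hφ.contDiffAt
        (hv.differentiable one_ne_zero x)),
    integral_add hcapillary hconvective, integral_div,
    EuclideanSpace.integral_fderiv_apply_eq_neg_integral_mul_divergence hψ hv hvc]
  simp [EuclideanSpace.divergence, hdiv]

/-- For `φ : ℝ^d → ℝ` a `C²` compactly supported scalar field and
`v : ℝ^d → ℝ^d` a `C¹`, compactly supported, divergence-free vector field,
`∫ ∇φ · ∇(v·∇φ) = ∫ (∇φ ⊗ ∇φ) : Dv`, where `A : B = ∑ i j, A i j * B i j`,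
`(Dv)_{ij}(x) = Dv(x)(e_j) i`, `∂_i φ(x) = Dφ(x)(e_i)` and `(v·∇φ)(x) = Dφ(x)(v x)`. -/
theorem integral_grad_dot_grad_convective_eq_capillary
    (d : ℕ) (φ : EuclideanSpace ℝ (Fin d) → ℝ)
    (v : EuclideanSpace ℝ (Fin d) → EuclideanSpace ℝ (Fin d))
    (hφ : ContDiff ℝ 2 φ) (hφc : HasCompactSupport φ)
    (hv : ContDiff ℝ 1 v) (hvc : HasCompactSupport v)
    (hdiv : ∀ x, ∑ i, fderiv ℝ v x (EuclideanSpace.single i (1:ℝ)) i = 0) :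
    ∫ x, ∑ i, fderiv ℝ φ x (EuclideanSpace.single i (1:ℝ)) *
        fderiv ℝ (fun y => fderiv ℝ φ y (v y)) x (EuclideanSpace.single i (1:ℝ))
      = ∫ x, ∑ i, ∑ j,
          (fderiv ℝ φ x (EuclideanSpace.single i (1:ℝ)) *
            fderiv ℝ φ x (EuclideanSpace.single j (1:ℝ))) *
          fderiv ℝ v x (EuclideanSpace.single j (1:ℝ)) i :=
  integral_grad_dot_grad_convective_eq_capillary_general d φ v hφ hv hvc hdiv
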